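/- arXiv:1310.6681 — 3 statements merged into one kernel-verified Lean document; each statement's English description precedes it below -/
import Mathlib

section
/- Infrared limit of the resummed pure coherent spectrum: for f(ω_1) = b P(ω_1/ω_0)·1_{(0,ω_0)}(ω_1) with P continuous, the compound Poisson density g satisfies g(0⁺) = e^{-w_1} b P(0), where w_1 = b∫_0^{ω_0} P(ω_1/ω_0)dω_1. -/
/-!
Since `f` vanishes on `(-∞, 0]` and is bounded by `M`, induction on the convolution integral
gives `|f^{*(n+1)}(ω)| ≤ M^(n+1) ω^n / n!` for `ω ≥ 0`. Hence every term of the series with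
`n ≥ 1` tends to `0` at `0⁺`, the terms are dominated uniformly on `(0, 1)` by the summable
`M^(n+1) / n!`, and Tannery's theorem lets the limit pass through the sum, leaving `f(0⁺)`.
-/

open MeasureTheory Real Filter

/-- `convPow f n` is the `(n+1)`-fold self-convolution `f^{*(n+1)}` of `f`. -/
noncomputable def convPow (f : ℝ → ℝ) : ℕ → ℝ → ℝ
  | 0 => f
  | n + 1 => fun ω => ∫ t : ℝ, f t * convPow f n (ω - t)

open Topology

section ConvPow

variable {f : ℝ → ℝ}

lemma convPow_eq_zero_of_nonpos (hf0 : ∀ t ≤ 0, f t = 0) :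
    ∀ (n : ℕ) {ω : ℝ}, ω ≤ 0 → convPow f n ω = 0
  | 0, ω, hω => hf0 ω hω
  | n + 1, ω, hω => by
    refine integral_eq_zero_of_ae (Eventually.of_forall fun t => ?_)
    rcases le_or_gt t 0 with ht | ht
    · simp [hf0 t ht]
    · simp [convPow_eq_zero_of_nonpos hf0 n (show ω - t ≤ 0 by linarith)]

lemma convPow_succ_eq_intervalIntegral (hf0 : ∀ t ≤ 0, f t = 0) (n : ℕ) {ω : ℝ}
    (hω : 0 ≤ ω) : convPow f (n + 1) ω = ∫ t in 0..ω, f t * convPow f n (ω - t) := by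
  rw [intervalIntegral.integral_of_le hω, setIntegral_eq_integral_of_forall_compl_eq_zero]
  · rfl
  intro t ht
  rcases le_or_gt t 0 with ht0 | ht0
  · simp [hf0 t ht0]
  · have hωt : ω - t ≤ 0 := by
      by_contra! h
      exact ht ⟨ht0, by linarith⟩
    simp [convPow_eq_zero_of_nonpos hf0 n hωt]

lemma abs_convPow_le {M : ℝ} (hf0 : ∀ t ≤ 0, f t = 0) (hfM : ∀ t, |f t| ≤ M) :
    ∀ (n : ℕ) {ω : ℝ}, 0 ≤ ω → |convPow f n ω| ≤ M ^ (n + 1) * ω ^ n / n.factorial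
  | 0, ω, _ => by simpa [convPow] using hfM ω
  | n + 1, ω, hω => by
    have hM : 0 ≤ M := (abs_nonneg _).trans (hfM 0)
    have hbound : ∀ t ∈ Set.Ioc 0 ω,
        ‖f t * convPow f n (ω - t)‖ ≤ M * (M ^ (n + 1) * (ω - t) ^ n / n.factorial) := by
      intro t ht
      rw [Real.norm_eq_abs, abs_mul]
      exact mul_le_mul (hfM t) (abs_convPow_le hf0 hfM n (by linarith [ht.2]))
        (abs_nonneg _) hM
    have hintegral : ∫ t in 0..ω, M * (M ^ (n + 1) * (ω - t) ^ n / n.factorial) =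
        M ^ (n + 2) * ω ^ (n + 1) / (n + 1).factorial := by
      rw [intervalIntegral.integral_const_mul, intervalIntegral.integral_div,
        intervalIntegral.integral_const_mul,
        intervalIntegral.integral_comp_sub_left (fun x => x ^ n) ω]
      simp only [sub_self, sub_zero, integral_pow, Nat.factorial_succ, Nat.cast_mul]
      push_cast
      field_simp
      ring
    rw [convPow_succ_eq_intervalIntegral hf0 n hω, ← hintegral]
    exact intervalIntegral.norm_integral_le_of_norm_le hω (Eventually.of_forall hbound)
      (Continuous.intervalIntegrable (by fun_prop) _ _)

lemma tendsto_convPow_nhdsGT_zero {M : ℝ} (hf0 : ∀ t ≤ 0, f t = 0)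
    (hfM : ∀ t, |f t| ≤ M) {n : ℕ} (hn : n ≠ 0) :
    Tendsto (convPow f n) (𝓝[>] 0) (𝓝 0) := by
  have hbound :
      Tendsto (fun ω : ℝ => M ^ (n + 1) * ω ^ n / n.factorial) (𝓝[>] 0) (𝓝 0) := by
    have : Continuous fun ω : ℝ => M ^ (n + 1) * ω ^ n / n.factorial := by fun_prop
    simpa [hn] using this.tendsto 0 |>.mono_left nhdsWithin_le_nhds
  refine squeeze_zero_norm' ?_ hbound
  filter_upwards [self_mem_nhdsWithin] with ω hω
  exact abs_convPow_le hf0 hfM n (le_of_lt hω)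

theorem tendsto_tsum_convPow_div_factorial {M L : ℝ} (hf0 : ∀ t ≤ 0, f t = 0)
    (hfM : ∀ t, |f t| ≤ M) (hfL : Tendsto f (𝓝[>] 0) (𝓝 L)) :
    Tendsto (fun ω => ∑' n : ℕ, convPow f n ω / (n + 1).factorial) (𝓝[>] 0) (𝓝 L) := by
  have hsummable : Summable fun n : ℕ => M * (M ^ n / n.factorial) :=
    (Real.summable_pow_div_factorial M).mul_left M
  have hlimit : ∀ n : ℕ, Tendsto (fun ω => convPow f n ω / (n + 1).factorial) (𝓝[>] 0)
      (𝓝 (if n = 0 then L else 0)) := by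
    rintro (_ | n)
    · simpa [convPow] using hfL
    · simpa using (tendsto_convPow_nhdsGT_zero hf0 hfM n.succ_ne_zero).div_const _
  have hdominated : ∀ᶠ ω in 𝓝[>] (0 : ℝ), ∀ n : ℕ,
      ‖convPow f n ω / (n + 1).factorial‖ ≤ M * (M ^ n / n.factorial) := by
    filter_upwards [Ioo_mem_nhdsGT (zero_lt_one' ℝ)] with ω hω n
    have hM : 0 ≤ M := (abs_nonneg _).trans (hfM 0)
    have hωn : ω ^ n ≤ 1 := pow_le_one₀ hω.1.le hω.2.le
    have hfactorial : (1 : ℝ) ≤ (n + 1).factorial := Nat.one_le_cast.2 (Nat.factorial_pos _)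
    calc ‖convPow f n ω / (n + 1).factorial‖ ≤ |convPow f n ω| := by
          rw [Real.norm_eq_abs, abs_div, Nat.abs_cast]
          exact div_le_self (abs_nonneg _) hfactorial
      _ ≤ M ^ (n + 1) * ω ^ n / n.factorial := abs_convPow_le hf0 hfM n hω.1.le
      _ ≤ M ^ (n + 1) * 1 / n.factorial := by gcongr
      _ = M * (M ^ n / n.factorial) := by ring
  simpa using tendsto_tsum_of_dominated_convergence hsummable hlimit hdominated

end ConvPow

lemma tendsto_comp_div_nhdsGT_zero {P : ℝ → ℝ} {ω₀ : ℝ} (hω₀ : 0 < ω₀)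
    (hP : ContinuousWithinAt P (Set.Icc 0 1) 0) :
    Tendsto (fun ω => P (ω / ω₀)) (𝓝[>] 0) (𝓝 (P 0)) := by
  have hdiv : Tendsto (· / ω₀) (𝓝[>] 0) (𝓝[Set.Icc 0 1] 0) := by
    refine tendsto_nhdsWithin_of_tendsto_nhds_of_eventually_within _ ?_ ?_
    · simpa using ((continuous_id.div_const ω₀).tendsto 0).mono_left
        (nhdsWithin_le_nhds (s := Set.Ioi 0))
    · filter_upwards [Ioo_mem_nhdsGT hω₀] with ω hω
      exact ⟨div_nonneg hω.1.le hω₀.le, (div_le_one hω₀).2 hω.2.le⟩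
  exact hP.tendsto.comp hdiv

theorem coherent_spectrum_infrared_limit_general
    (b ω₀ : ℝ) (hω₀ : 0 < ω₀)
    (P : ℝ → ℝ) (hP_cont : ContinuousOn P (Set.Icc 0 1))
    (f : ℝ → ℝ)
    (hf : ∀ ω, f ω = if ω ∈ Set.Ioo 0 ω₀ then b * P (ω / ω₀) else 0)
    (w₁ : ℝ)
    (g : ℝ → ℝ)
    (hg : ∀ ω, g ω = Real.exp (-w₁) * ∑' n : ℕ, convPow f n ω / (n + 1).factorial) :
    Filter.Tendsto g (nhdsWithin 0 (Set.Ioi 0))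
      (nhds (Real.exp (-w₁) * b * P 0)) := by
  obtain ⟨K, hK⟩ := isCompact_Icc.exists_bound_of_continuousOn hP_cont
  have hf0 : ∀ t ≤ 0, f t = 0 := fun t ht => by
    rw [hf, if_neg fun h => (h.1.trans_le ht).false]
  have hfM : ∀ t, |f t| ≤ |b| * K := fun t => by
    rw [hf]
    split_ifs with ht
    · rw [abs_mul]
      refine mul_le_mul_of_nonneg_left (hK _ ?_) (abs_nonneg b)
      exact ⟨div_nonneg ht.1.le hω₀.le, (div_le_one hω₀).2 ht.2.le⟩
    · have hK0 : 0 ≤ K := (norm_nonneg _).trans (hK 0 ⟨le_rfl, zero_le_one⟩)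
      simpa using mul_nonneg (abs_nonneg b) hK0
  have hfL : Tendsto f (𝓝[>] 0) (𝓝 (b * P 0)) := by
    have hP0 := tendsto_comp_div_nhdsGT_zero hω₀ (hP_cont 0 ⟨le_rfl, zero_le_one⟩)
    refine (hP0.const_mul b).congr' ?_
    filter_upwards [Ioo_mem_nhdsGT hω₀] with ω hω
    rw [hf, if_pos hω]
  simpa only [funext hg, mul_assoc] using
    (tendsto_tsum_convPow_div_factorial hf0 hfM hfL).const_mul (Real.exp (-w₁))

/-- Infrared limit of the resummed pure coherent spectrum: for
`f(ω₁) = b P(ω₁/ω₀)·1_{(0,ω₀)}(ω₁)` with `P` continuous, the compound Poisson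
density `g = e^{-w₁} ∑_{n≥1} f^{*n}/n!` satisfies `g(0⁺) = e^{-w₁} b P(0)`. -/
theorem coherent_spectrum_infrared_limit
    (b ω₀ : ℝ) (hb : 0 < b) (hω₀ : 0 < ω₀)
    (P : ℝ → ℝ) (hP_cont : ContinuousOn P (Set.Icc 0 1))
    (hP_nonneg : ∀ z ∈ Set.Icc (0:ℝ) 1, 0 ≤ P z)
    (f : ℝ → ℝ)
    (hf : ∀ ω, f ω = if ω ∈ Set.Ioo 0 ω₀ then b * P (ω / ω₀) else 0)
    (w₁ : ℝ) (hw₁ : w₁ = b * ∫ ω in Set.Ioo (0:ℝ) ω₀, P (ω / ω₀))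
    (g : ℝ → ℝ)
    (hg : ∀ ω, g ω = Real.exp (-w₁) * ∑' n : ℕ, convPow f n ω / (n + 1).factorial) :
    Filter.Tendsto g (nhdsWithin 0 (Set.Ioi 0))
      (nhds (Real.exp (-w₁) * b * P 0)) :=
  coherent_spectrum_infrared_limit_general b ω₀ hω₀ P hP_cont f hf w₁ g hg
end

section
/- Discontinuity of the resummed coherent spectrum at the coherent edge: with f(ω_1) = bP(ω_1/ω_0)1_{(0,ω_0)} and P continuous with P(1) > 0, the resummed density g = e^{-w_1}Σ_{n≥1} f^{*n}/n! has jump discontinuity at ω = ω_0 equal to Δ = bP(1) e^{-w_1}; all terms with n ≥ 2 are continuous at ω_0. -/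
/-!
Since `f` is integrable and bounded, `|f^{*n}| ≤ ‖f‖₁^{n-1} ‖f‖_∞`, so the resummed series
converges uniformly. For `n ≥ 2`, `f^{*n}` is the convolution of the integrable `f` with a bounded
function that is continuous almost everywhere (the discontinuities of `f` are only at `0` and
`ω₀`), hence continuous by dominated convergence. Therefore `g - e^{-w₁} f` is continuous, and the
jump of `g` at `ω₀` is `e^{-w₁}` times the jump of `f`, which is `b P(1) - 0`.
-/

open MeasureTheory Real Filter

section Convolution

variable {f g : ℝ → ℝ} {M : ℝ}

lemma abs_integral_mul_comp_sub_le (hf : Integrable f) (hg : ∀ x, |g x| ≤ M) (ω : ℝ) :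
    |∫ t, f t * g (ω - t)| ≤ (∫ t, |f t|) * M :=
  calc |∫ t, f t * g (ω - t)| ≤ ∫ t, |f t| * |g (ω - t)| := by
        simpa only [norm_mul, Real.norm_eq_abs] using
          norm_integral_le_integral_norm fun t => f t * g (ω - t)
    _ ≤ ∫ t, |f t| * M := by
        refine integral_mono_of_nonneg (ae_of_all _ fun t => by positivity)
          (hf.norm.mul_const M) (ae_of_all _ fun t => ?_)
        exact mul_le_mul_of_nonneg_left (hg _) (abs_nonneg _)
    _ = (∫ t, |f t|) * M := integral_mul_const M _

lemma continuous_integral_mul_comp_sub (hf : Integrable f) (hgm : AEStronglyMeasurable g)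
    (hg : ∀ x, |g x| ≤ M) (hgc : ∀ᵐ x, ContinuousAt g x) :
    Continuous fun ω => ∫ t, f t * g (ω - t) := by
  refine continuous_iff_continuousAt.mpr fun ω => ?_
  have hshift (ω' : ℝ) := (Measure.measurePreserving_sub_left volume ω').quasiMeasurePreserving
  refine continuousAt_of_dominated (bound := fun t => |f t| * M)
    (Eventually.of_forall fun ω' => hf.1.mul (hgm.comp_quasiMeasurePreserving (hshift ω')))
    (Eventually.of_forall fun ω' => ae_of_all _ fun t => ?_) (hf.norm.mul_const M) ?_
  · rw [Real.norm_eq_abs, abs_mul]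
    exact mul_le_mul_of_nonneg_left (hg _) (abs_nonneg _)
  · filter_upwards [(hshift ω).tendsto_ae.eventually hgc] with t ht
    exact continuousAt_const.mul (ht.comp_of_eq (continuousAt_id.sub continuousAt_const) rfl)

end Convolution

section ConvPow

variable {f : ℝ → ℝ} {M : ℝ}

lemma abs_convPow_le_s17 (hf : Integrable f) (hM : ∀ x, |f x| ≤ M) (n : ℕ) (ω : ℝ) :
    |convPow f n ω| ≤ (∫ t, |f t|) ^ n * M := by
  induction n generalizing ω with
  | zero => simpa [convPow] using hM ω
  | succ n ih =>
    calc |convPow f (n + 1) ω| ≤ (∫ t, |f t|) * ((∫ t, |f t|) ^ n * M) :=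
          abs_integral_mul_comp_sub_le hf ih ω
      _ = (∫ t, |f t|) ^ (n + 1) * M := by ring

lemma continuous_convPow_succ (hf : Integrable f) (hM : ∀ x, |f x| ≤ M)
    (hfc : ∀ᵐ x, ContinuousAt f x) (n : ℕ) : Continuous (convPow f (n + 1)) := by
  induction n with
  | zero => exact continuous_integral_mul_comp_sub hf hf.1 hM hfc
  | succ n ih =>
    exact continuous_integral_mul_comp_sub hf ih.aestronglyMeasurable (abs_convPow_le_s17 hf hM _)
      (ae_of_all _ fun x => ih.continuousAt)

lemma abs_convPow_div_factorial_le (hf : Integrable f) (hM : ∀ x, |f x| ≤ M) (n : ℕ) (ω : ℝ) :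
    |convPow f n ω / ((n + 1).factorial : ℝ)| ≤ (∫ t, |f t|) ^ n / n.factorial * M := by
  rw [abs_div, Nat.abs_cast, div_mul_eq_mul_div]
  calc |convPow f n ω| / ((n + 1).factorial : ℝ) ≤ |convPow f n ω| / n.factorial := by
        gcongr
        exact n.le_succ
    _ ≤ (∫ t, |f t|) ^ n * M / n.factorial := by gcongr; exact abs_convPow_le_s17 hf hM n ω

lemma summable_convPow_div_factorial (hf : Integrable f) (hM : ∀ x, |f x| ≤ M) (ω : ℝ) :
    Summable fun n => convPow f n ω / ((n + 1).factorial : ℝ) :=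
  ((Real.summable_pow_div_factorial (∫ t, |f t|)).mul_right M).of_norm_bounded
    fun n => abs_convPow_div_factorial_le hf hM n ω

lemma continuous_tsum_convPow_div_factorial_sub (hf : Integrable f) (hM : ∀ x, |f x| ≤ M)
    (hfc : ∀ᵐ x, ContinuousAt f x) :
    Continuous fun ω => ∑' n, convPow f n ω / ((n + 1).factorial : ℝ) - f ω := by
  have htail : (fun ω => ∑' n, convPow f n ω / ((n + 1).factorial : ℝ) - f ω) =
      fun ω => ∑' n, convPow f (n + 1) ω / ((n + 1 + 1).factorial : ℝ) := by
    funext ω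
    rw [(summable_convPow_div_factorial hf hM ω).tsum_eq_zero_add]
    simp [convPow]
  rw [htail]
  exact continuous_tsum (fun n => (continuous_convPow_succ hf hM hfc n).div_const _)
    ((summable_nat_add_iff 1).mpr
      ((Real.summable_pow_div_factorial (∫ t, |f t|)).mul_right M))
    fun n ω => abs_convPow_div_factorial_le hf hM (n + 1) ω

end ConvPow

section Indicator

lemma Convex.ae_continuousAt_indicator {E β : Type*} [NormedAddCommGroup E] [NormedSpace ℝ E]
    [MeasurableSpace E] [BorelSpace E] [FiniteDimensional ℝ E] [TopologicalSpace β] [Zero β]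
    (μ : Measure E) [μ.IsAddHaarMeasure] {s : Set E} {h : E → β} (hs : Convex ℝ s)
    (hh : ContinuousOn h (interior s)) : ∀ᵐ x ∂μ, ContinuousAt (s.indicator h) x := by
  filter_upwards [measure_eq_zero_iff_ae_notMem.mp (hs.addHaar_frontier μ)] with x hx
  exact hh.continuousAt_indicator hx

lemma exists_abs_indicator_le {α : Type*} [TopologicalSpace α] {K s : Set α} {h : α → ℝ}
    (hK : IsCompact K) (hsK : s ⊆ K) (hh : ContinuousOn h K) : ∃ M, ∀ x, |s.indicator h x| ≤ M := by
  obtain ⟨C, hC⟩ := hK.exists_bound_of_continuousOn hh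
  refine ⟨max C 0, fun x => ?_⟩
  by_cases hx : x ∈ s
  · rw [Set.indicator_of_mem hx, ← Real.norm_eq_abs]
    exact le_max_of_le_left (hC x (hsK hx))
  · simp [Set.indicator_of_notMem hx]

variable {β : Type*} [TopologicalSpace β] [Zero β] {a b : ℝ} {h : ℝ → β}

lemma tendsto_indicator_Ioo_nhdsLT (hab : a < b) (hh : ContinuousWithinAt h (Set.Icc a b) b) :
    Tendsto ((Set.Ioo a b).indicator h) (nhdsWithin b (Set.Iio b)) (nhds (h b)) := by
  refine (hh.mono_of_mem_nhdsWithin (Icc_mem_nhdsLT hab)).tendsto.congr' ?_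
  filter_upwards [Ioo_mem_nhdsLT hab] with x hx
  exact (Set.indicator_of_mem hx h).symm

lemma tendsto_indicator_Ioo_nhdsGT :
    Tendsto ((Set.Ioo a b).indicator h) (nhdsWithin b (Set.Ioi b)) (nhds 0) := by
  refine tendsto_const_nhds.congr' ?_
  filter_upwards [self_mem_nhdsWithin] with x hx
  exact (Set.indicator_of_notMem (fun hx' => hx'.2.not_gt hx) h).symm

end Indicator

theorem coherent_spectrum_edge_discontinuity_general
    (b ω₀ : ℝ) (hω₀ : 0 < ω₀)
    (P : ℝ → ℝ) (hP_cont : ContinuousOn P (Set.Icc 0 1))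
    (f : ℝ → ℝ)
    (hf : ∀ ω, f ω = if ω ∈ Set.Ioo 0 ω₀ then b * P (ω / ω₀) else 0)
    (w₁ : ℝ)
    (g : ℝ → ℝ)
    (hg : ∀ ω, g ω = Real.exp (-w₁) * ∑' n : ℕ, convPow f n ω / (n + 1).factorial) :
    (∀ n : ℕ, 1 ≤ n → ContinuousOn (convPow f n) (Set.Ioi 0)) ∧
    (∃ gm gp : ℝ,
      Filter.Tendsto g (nhdsWithin ω₀ (Set.Iio ω₀)) (nhds gm) ∧
      Filter.Tendsto g (nhdsWithin ω₀ (Set.Ioi ω₀)) (nhds gp) ∧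
      gm - gp = b * P 1 * Real.exp (-w₁)) := by
  set h : ℝ → ℝ := fun ω => b * P (ω / ω₀)
  have hf_eq : f = (Set.Ioo 0 ω₀).indicator h := funext fun ω => by rw [hf, Set.indicator_apply]
  have hh : ContinuousOn h (Set.Icc 0 ω₀) :=
    continuousOn_const.mul <| hP_cont.comp (continuousOn_id.div_const ω₀) fun ω hω =>
      ⟨div_nonneg hω.1 hω₀.le, div_le_one_of_le₀ hω.2 hω₀.le⟩
  have hf_int : Integrable f := hf_eq ▸
    (hh.integrableOn_Icc.mono_set Set.Ioo_subset_Icc_self).integrable_indicator measurableSet_Ioo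
  obtain ⟨M, hM⟩ : ∃ M, ∀ x, |f x| ≤ M :=
    hf_eq ▸ exists_abs_indicator_le isCompact_Icc Set.Ioo_subset_Icc_self hh
  have hf_ae : ∀ᵐ x, ContinuousAt f x := hf_eq ▸ (convex_Ioo 0 ω₀).ae_continuousAt_indicator
    volume (by rw [interior_Ioo]; exact hh.mono Set.Ioo_subset_Icc_self)
  refine ⟨fun n hn => ?_, ?_⟩
  · obtain ⟨m, rfl⟩ := Nat.exists_eq_add_of_le' hn
    exact (continuous_convPow_succ hf_int hM hf_ae m).continuousOn
  set R : ℝ → ℝ := fun ω => ∑' n, convPow f n ω / ((n + 1).factorial : ℝ) - f ω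
  have hR : Continuous R := continuous_tsum_convPow_div_factorial_sub hf_int hM hf_ae
  have hg_eq : g = fun ω => exp (-w₁) * (f ω + R ω) := funext fun ω => by simp [hg, R]
  have hR_lim (s : Set ℝ) := (hR.tendsto ω₀).mono_left (nhdsWithin_le_nhds (s := s))
  refine ⟨exp (-w₁) * (h ω₀ + R ω₀), exp (-w₁) * (0 + R ω₀), ?_, ?_, ?_⟩
  · rw [hg_eq, hf_eq]
    exact ((tendsto_indicator_Ioo_nhdsLT hω₀ (hh _ (Set.right_mem_Icc.mpr hω₀.le))).add
      (hR_lim _)).const_mul _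
  · rw [hg_eq, hf_eq]
    exact (tendsto_indicator_Ioo_nhdsGT.add (hR_lim _)).const_mul _
  · simp only [h, div_self hω₀.ne']
    ring

/-- Discontinuity of the resummed coherent spectrum at the coherent edge: with
`f(ω₁) = bP(ω₁/ω₀)1_{(0,ω₀)}` and `P` continuous with `P(1) > 0`, all
self-convolutions `f^{*n}` with `n ≥ 2` are continuous on `(0,∞)`, and the
resummed density `g = e^{-w₁}∑_{n≥1} f^{*n}/n!` has one-sided limits at
`ω = ω₀` whose jump equals `Δ = bP(1) e^{-w₁}`. -/
theorem coherent_spectrum_edge_discontinuity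
    (b ω₀ : ℝ) (hb : 0 < b) (hω₀ : 0 < ω₀)
    (P : ℝ → ℝ) (hP_cont : ContinuousOn P (Set.Icc 0 1))
    (hP_nonneg : ∀ z ∈ Set.Icc (0:ℝ) 1, 0 ≤ P z) (hP1 : 0 < P 1)
    (f : ℝ → ℝ)
    (hf : ∀ ω, f ω = if ω ∈ Set.Ioo 0 ω₀ then b * P (ω / ω₀) else 0)
    (w₁ : ℝ) (hw₁ : w₁ = b * ∫ ω in Set.Ioo (0:ℝ) ω₀, P (ω / ω₀))
    (g : ℝ → ℝ)
    (hg : ∀ ω, g ω = Real.exp (-w₁) * ∑' n : ℕ, convPow f n ω / (n + 1).factorial) :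
    (∀ n : ℕ, 1 ≤ n → ContinuousOn (convPow f n) (Set.Ioi 0)) ∧
    (∃ gm gp : ℝ,
      Filter.Tendsto g (nhdsWithin ω₀ (Set.Iio ω₀)) (nhds gm) ∧
      Filter.Tendsto g (nhdsWithin ω₀ (Set.Ioi ω₀)) (nhds gp) ∧
      gm - gp = b * P 1 * Real.exp (-w₁)) :=
  coherent_spectrum_edge_discontinuity_general b ω₀ hω₀ P hP_cont f hf w₁ g hg
end

section
/- Asymptotics of the Bethe–Heitler Mellin exponent: μ(s) = ∫_0^1 (1 − z^{s−1})/(1 − z) · W_BH(1−z) dz = ln s + γ_E + ∫_0^1 (W_BH(z') − W_BH(0))/z' dz' + O(1/s) as s → +∞, and for W_BH(z) = 1 − z + (3/4)z² the constant ∫_0^1 (W_BH(z')−1)/z' dz' = −5/8, giving the effective cutoff κ = e^{-5/8}. -/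
open MeasureTheory Real Filter

/-- The completely screened ultra-relativistic Bethe–Heitler profile
`W_BH(z) = 1 − z + (3/4)z²`. -/
noncomputable def W_BH (z : ℝ) : ℝ := 1 - z + 3 / 4 * z ^ 2

/-- The Bethe–Heitler Mellin exponent
`μ(s) = ∫_0^1 (1 − z^{s−1})/(1 − z) · W_BH(1−z) dz`. -/
noncomputable def muBH (s : ℝ) : ℝ :=
  ∫ z in Set.Ioo (0:ℝ) 1, (1 - z ^ (s - 1)) / (1 - z) * W_BH (1 - z)

/-! Write `W_BH (1 - z) = 1 + (1 - z) q z` with `q z = -1/4 - 3/4 z`. The `1` contributes the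
harmonic integral `∫₀¹ (1 - z^(s-1)) / (1 - z) dz = ψ(s) + γ`: it is monotone in `s` and equals
the harmonic number `H_m` at `s = m + 1`, so it is squeezed between `H_m` and `H_{m+1}`, which lie
within `O(1/m)` of `log m + γ` by the monotone Euler–Mascheroni sequences. The second part differs from
`∫₀¹ q = -5/8` by `∫₀¹ z^(s-1) q z dz = O(1/s)`. -/

open Set

lemma setIntegral_Ioo_eq_intervalIntegral {E : Type*} [NormedAddCommGroup E] [NormedSpace ℝ E]
    {f : ℝ → E} {a b : ℝ} (hab : a ≤ b) :
    ∫ z in Ioo a b, f z = ∫ z in a..b, f z := by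
  rw [intervalIntegral.integral_of_le hab, integral_Ioc_eq_integral_Ioo]

lemma integral_Ioo_zero_one_affine (a b : ℝ) : ∫ z in Ioo (0:ℝ) 1, (a + b * z) = a + b / 2 := by
  rw [setIntegral_Ioo_eq_intervalIntegral zero_le_one, intervalIntegral.integral_add
    intervalIntegrable_const (intervalIntegral.intervalIntegrable_id.const_mul b),
    intervalIntegral.integral_const_mul, integral_id]
  simp [div_eq_mul_inv]

lemma integral_Ioo_zero_one_rpow {p : ℝ} (hp : -1 < p) :
    ∫ z in Ioo (0:ℝ) 1, z ^ p = 1 / (p + 1) := by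
  rw [setIntegral_Ioo_eq_intervalIntegral zero_le_one, integral_rpow (Or.inl hp),
    zero_rpow (by linarith), one_rpow, sub_zero]

lemma integrableOn_Ioo_zero_one_rpow {p : ℝ} (hp : -1 < p) :
    IntegrableOn (fun z : ℝ => z ^ p) (Ioo 0 1) :=
  (intervalIntegral.intervalIntegrable_rpow' hp).1.mono_set Ioo_subset_Ioc_self

lemma log_sub_log_le_div {a b : ℝ} (ha : 0 < a) (hb : 0 < b) : log b - log a ≤ (b - a) / a := by
  have := log_le_sub_one_of_pos (div_pos hb ha)
  rw [log_div hb.ne' ha.ne'] at this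
  rwa [sub_div, div_self ha.ne']

lemma abs_setIntegral_one_sub_rpow_mul_sub_le {q : ℝ → ℝ} {p C : ℝ} (hp : 0 ≤ p)
    (hq : IntegrableOn q (Ioo 0 1)) (hC : ∀ z ∈ Ioo (0:ℝ) 1, |q z| ≤ C) :
    |(∫ z in Ioo (0:ℝ) 1, (1 - z ^ p) * q z) - ∫ z in Ioo (0:ℝ) 1, q z| ≤ C / (p + 1) := by
  have hpow : IntegrableOn (fun z : ℝ => z ^ p * q z) (Ioo 0 1) := by
    refine hq.bdd_mul (c := 1) ?_ ?_
    · exact (measurable_id.pow_const p).aestronglyMeasurable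
    · filter_upwards [ae_restrict_mem measurableSet_Ioo] with z hz
      rw [norm_of_nonneg (rpow_nonneg hz.1.le p)]
      exact rpow_le_one hz.1.le hz.2.le hp
  have hsplit : ∫ z in Ioo (0:ℝ) 1, (1 - z ^ p) * q z =
      (∫ z in Ioo (0:ℝ) 1, q z) - ∫ z in Ioo (0:ℝ) 1, z ^ p * q z := by
    rw [← integral_sub hq hpow]
    simp only [sub_mul, one_mul]
  rw [hsplit, sub_sub_cancel_left, abs_neg, ← norm_eq_abs]
  calc ‖∫ z in Ioo (0:ℝ) 1, z ^ p * q z‖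
      ≤ ∫ z in Ioo (0:ℝ) 1, C * z ^ p := by
        refine norm_integral_le_of_norm_le
          ((integrableOn_Ioo_zero_one_rpow (by linarith)).const_mul C) ?_
        filter_upwards [ae_restrict_mem measurableSet_Ioo] with z hz
        rw [norm_mul, norm_of_nonneg (rpow_nonneg hz.1.le p), mul_comm]
        exact mul_le_mul_of_nonneg_right (hC z hz) (rpow_nonneg hz.1.le p)
    _ = C / (p + 1) := by
        rw [integral_const_mul, integral_Ioo_zero_one_rpow (by linarith), mul_one_div]

-- `harmonicIntegral x = ψ(x + 1) + γ`, the harmonic number `H_x` at a real argument.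
noncomputable def harmonicIntegral (x : ℝ) : ℝ := ∫ z in Ioo (0:ℝ) 1, (1 - z ^ x) / (1 - z)

section harmonicIntegral

variable {x z : ℝ}

lemma one_sub_rpow_div_one_sub_nonneg (hx : 0 ≤ x) (hz : z ∈ Ioo (0:ℝ) 1) :
    0 ≤ (1 - z ^ x) / (1 - z) :=
  div_nonneg (sub_nonneg.2 (rpow_le_one hz.1.le hz.2.le hx)) (sub_nonneg.2 hz.2.le)

lemma one_sub_rpow_div_one_sub_le (hx : 1 ≤ x) (hz : z ∈ Ioo (0:ℝ) 1) :
    (1 - z ^ x) / (1 - z) ≤ x := by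
  have bernoulli : 1 + x * (z - 1) ≤ z ^ x := by
    simpa using one_add_mul_self_le_rpow_one_add (by linarith [hz.1] : -1 ≤ z - 1) hx
  rw [div_le_iff₀ (sub_pos.2 hz.2)]
  linarith

lemma integrableOn_one_sub_rpow_div_one_sub (hx : 1 ≤ x) :
    IntegrableOn (fun z : ℝ => (1 - z ^ x) / (1 - z)) (Ioo 0 1) := by
  refine Measure.integrableOn_of_bounded (M := x) measure_Ioo_lt_top.ne
    (by fun_prop : Measurable _).aestronglyMeasurable ?_
  filter_upwards [ae_restrict_mem measurableSet_Ioo] with z hz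
  rw [norm_of_nonneg (one_sub_rpow_div_one_sub_nonneg (by linarith) hz)]
  exact one_sub_rpow_div_one_sub_le hx hz

lemma harmonicIntegral_natCast (m : ℕ) : harmonicIntegral m = harmonic m := by
  have geom : ∀ z ∈ Ioo (0:ℝ) 1, (1 - z ^ (m : ℝ)) / (1 - z) = ∑ k ∈ Finset.range m, z ^ k := by
    intro z hz
    rw [geom_sum_eq hz.2.ne, rpow_natCast, ← neg_sub (z ^ m), ← neg_sub z, neg_div_neg_eq]
  rw [harmonicIntegral, setIntegral_congr_fun measurableSet_Ioo geom,
    setIntegral_Ioo_eq_intervalIntegral zero_le_one, intervalIntegral.integral_finsetSum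
      fun k _ => intervalIntegral.intervalIntegrable_pow k, harmonic]
  simp [integral_pow]

lemma monotoneOn_harmonicIntegral : MonotoneOn harmonicIntegral (Ici 1) := by
  intro x hx y hy hxy
  refine setIntegral_mono_on (integrableOn_one_sub_rpow_div_one_sub hx)
    (integrableOn_one_sub_rpow_div_one_sub hy) measurableSet_Ioo fun z hz => ?_
  exact div_le_div_of_nonneg_right
    (sub_le_sub_left (rpow_le_rpow_of_exponent_ge hz.1 hz.2.le hxy) 1) (sub_nonneg.2 hz.2.le)

lemma abs_harmonicIntegral_sub_log_sub_eulerMascheroniConstant_le (hx : 2 ≤ x) :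
    |harmonicIntegral x - log (x + 1) - eulerMascheroniConstant| ≤ 4 / (x + 1) := by
  set m := ⌊x⌋₊
  have hmx : (m : ℝ) ≤ x := Nat.floor_le (by linarith)
  have hxm : x < m + 1 := Nat.lt_floor_add_one x
  have hm2 : 2 ≤ m := Nat.le_floor (by exact_mod_cast hx)
  have hm2' : (2 : ℝ) ≤ m := by exact_mod_cast hm2
  have lower : (harmonic m : ℝ) ≤ harmonicIntegral x := by
    rw [← harmonicIntegral_natCast]
    exact monotoneOn_harmonicIntegral (mem_Ici.2 (by linarith)) (mem_Ici.2 (by linarith)) hmx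
  have upper : harmonicIntegral x ≤ harmonic (m + 1) := by
    rw [← harmonicIntegral_natCast]
    exact monotoneOn_harmonicIntegral (mem_Ici.2 (by linarith))
      (mem_Ici.2 (by push_cast; linarith)) (by push_cast; linarith)
  have gamma_lower := eulerMascheroniSeq_lt_eulerMascheroniConstant (m + 1)
  have gamma_upper := eulerMascheroniConstant_lt_eulerMascheroniSeq' m
  rw [eulerMascheroniSeq] at gamma_lower
  rw [eulerMascheroniSeq', if_neg (by omega)] at gamma_upper
  push_cast at gamma_lower
  have log_lower : log (m + 1) ≤ log (x + 1) := log_le_log (by positivity) (by linarith)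
  have log_upper : log (x + 1) ≤ log (m + 1 + 1) := log_le_log (by linarith) (by linarith)
  have gap₁ := log_sub_log_le_div (a := m + 1) (b := m + 1 + 1) (by positivity) (by positivity)
  have gap₂ := log_sub_log_le_div (a := m) (b := m + 1 + 1) (by positivity) (by positivity)
  have harmonic_add_one : (harmonic (m + 1) : ℝ) = harmonic m + 1 / (m + 1) := by
    rw [harmonic_succ]; push_cast; ring
  have h₁ : (m + 1 + 1 - (m + 1)) / ((m : ℝ) + 1) ≤ 4 / (x + 1) := by
    rw [div_le_div_iff₀ (by positivity) (by linarith)]; nlinarith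
  have h₂ : (m + 1 + 1 - m) / (m : ℝ) ≤ 4 / (x + 1) := by
    rw [div_le_div_iff₀ (by positivity) (by linarith)]; nlinarith
  rw [abs_le]
  constructor <;> linarith

end harmonicIntegral

lemma integral_W_BH_sub_div : ∫ z in Ioo (0:ℝ) 1, (W_BH z - W_BH 0) / z = -(5 / 8) := by
  have h : ∀ z ∈ Ioo (0:ℝ) 1, (W_BH z - W_BH 0) / z = -1 + 3 / 4 * z := by
    intro z hz
    rw [W_BH, W_BH]
    field_simp [hz.1.ne']
    ring
  rw [setIntegral_congr_fun measurableSet_Ioo h, integral_Ioo_zero_one_affine]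
  norm_num

-- `(W_BH (1 - z) - 1) / (1 - z) = -1/4 - 3/4 z`; after `z' = 1 - z` its integral is
-- `∫₀¹ (W_BH z' - 1) / z' dz'`.
lemma muBH_eq_harmonicIntegral_add {s : ℝ} (hs : 2 ≤ s) :
    muBH s = harmonicIntegral (s - 1) +
      ∫ z in Ioo (0:ℝ) 1, (1 - z ^ (s - 1)) * (-(1 / 4) + -(3 / 4) * z) := by
  have h : ∀ z ∈ Ioo (0:ℝ) 1, (1 - z ^ (s - 1)) / (1 - z) * W_BH (1 - z) =
      (1 - z ^ (s - 1)) / (1 - z) + (1 - z ^ (s - 1)) * (-(1 / 4) + -(3 / 4) * z) := by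
    intro z hz
    rw [W_BH]
    field_simp [(sub_pos.2 hz.2).ne']
    ring
  have hq : IntegrableOn (fun z : ℝ => (1 - z ^ (s - 1)) * (-(1 / 4) + -(3 / 4) * z))
      (Ioo 0 1) := by
    refine (Continuous.integrableOn_Icc ?_).mono_set Ioo_subset_Icc_self
    have := continuous_rpow_const (q := s - 1) (by linarith)
    fun_prop
  rw [muBH, setIntegral_congr_fun measurableSet_Ioo h,
    integral_add (integrableOn_one_sub_rpow_div_one_sub (by linarith)) hq, harmonicIntegral]

lemma abs_setIntegral_one_sub_rpow_mul_affine_add_five_eighths_le {s : ℝ} (hs : 1 ≤ s) :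
    |(∫ z in Ioo (0:ℝ) 1, (1 - z ^ (s - 1)) * (-(1 / 4) + -(3 / 4) * z)) - -(5 / 8)| ≤ 1 / s := by
  have h := abs_setIntegral_one_sub_rpow_mul_sub_le (p := s - 1) (C := 1) (by linarith)
    ((by fun_prop : Continuous fun z : ℝ => -(1 / 4) + -(3 / 4) * z).integrableOn_Icc.mono_set
      Ioo_subset_Icc_self)
    fun z hz => abs_le.2 ⟨by linarith [hz.2], by linarith [hz.1]⟩
  rwa [integral_Ioo_zero_one_affine, sub_add_cancel,
    show -(1 / 4) + -(3 / 4) / 2 = -(5 / 8 : ℝ) by norm_num] at h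

/-- Asymptotics of the Bethe–Heitler Mellin exponent:
`μ(s) = ln s + γ_E + ∫_0^1 (W_BH(z') − W_BH(0))/z' dz' + O(1/s)` as
`s → +∞`; moreover `∫_0^1 (W_BH(z') − W_BH(0))/z' dz' = −5/8`, so the effective
cutoff is `κ = e^{-5/8}`. -/
theorem betheHeitler_mellin_asymptotics :
    (∫ z in Set.Ioo (0:ℝ) 1, (W_BH z - W_BH 0) / z = -(5 / 8)) ∧
    ((fun s : ℝ => muBH s -
        (Real.log s + Real.eulerMascheroniConstant +
          ∫ z in Set.Ioo (0:ℝ) 1, (W_BH z - W_BH 0) / z)) =O[atTop]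
      (fun s : ℝ => 1 / s)) ∧
    Real.exp (∫ z in Set.Ioo (0:ℝ) 1, (W_BH z - W_BH 0) / z) =
      Real.exp (-(5 / 8)) := by
  refine ⟨integral_W_BH_sub_div, ?_, by rw [integral_W_BH_sub_div]⟩
  refine Asymptotics.IsBigO.of_bound 5 ?_
  filter_upwards [eventually_ge_atTop 3] with s hs
  have harmonic_part :=
    abs_harmonicIntegral_sub_log_sub_eulerMascheroniConstant_le (x := s - 1) (by linarith)
  have remainder :=
    abs_setIntegral_one_sub_rpow_mul_affine_add_five_eighths_le (s := s) (by linarith)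
  rw [sub_add_cancel] at harmonic_part
  rw [integral_W_BH_sub_div, muBH_eq_harmonicIntegral_add (by linarith), norm_eq_abs,
    norm_of_nonneg (by positivity)]
  calc _ = |(harmonicIntegral (s - 1) - log s - eulerMascheroniConstant) +
          ((∫ z in Ioo (0:ℝ) 1, (1 - z ^ (s - 1)) * (-(1 / 4) + -(3 / 4) * z)) - -(5 / 8))| := by
        congr 1; ring
    _ ≤ 4 / s + 1 / s := (abs_add_le _ _).trans (add_le_add harmonic_part remainder)
    _ = 5 * (1 / s) := by ring
end
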